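/- (Identity Principle) Let n ≥ 1, let Ω ⊆ 𝕆_sⁿ be a slice-domain, and let f, g : Ω → 𝕆 both be weak slice regular. Suppose that either there exist I ∈ 𝕊 and a nonempty set V ⊆ Ω ∩ ℂ_Iⁿ that is open in ℂ_Iⁿ with f = g on V, or there exists a nonempty set V ⊆ Ω ∩ ℝⁿ that is open in ℝⁿ with f = g on V. Then f = g on all of Ω. The same conclusion holds if f and g are both strong slice regular. -/

import Mathlib

/-! Octonions via the Cayley–Dickson construction on the quaternions,
the n-dimensional quadratic cone, the slice topology, and slice regularity. -/

noncomputable section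
open Quaternion Topology

/-- The octonions, as `ℍ × ℍ` with the (L²) Euclidean norm and
Cayley–Dickson multiplication. -/
abbrev Oct : Type := WithLp 2 (ℍ × ℍ)

namespace Oct

def c1 (p : Oct) : ℍ := (WithLp.equiv 2 (ℍ × ℍ) p).1
def c2 (p : Oct) : ℍ := (WithLp.equiv 2 (ℍ × ℍ) p).2
def mk (a b : ℍ) : Oct := (WithLp.equiv 2 (ℍ × ℍ)).symm (a, b)

instance : One Oct := ⟨mk 1 0⟩

/-- Cayley–Dickson multiplication. -/
instance : Mul Oct :=
  ⟨fun p q => mk (c1 p * c1 q - star (c2 q) * c2 p) (c2 q * c1 p + c2 p * star (c1 q))⟩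

/-- Octonionic conjugation. -/
instance : Star Oct := ⟨fun p => mk (star (c1 p)) (-(c2 p))⟩

/-- Inverse: `p⁻¹ = ‖p‖⁻² • (star p)` (so `0⁻¹ = 0`). -/
instance : Inv Oct := ⟨fun p => (‖p‖ ^ 2)⁻¹ • star p⟩

/-- The real inner product on `𝕆 ≅ ℝ⁸`, via polarization. -/
def oinner (p q : Oct) : ℝ := (1 / 4) * (‖p + q‖ ^ 2 - ‖p - q‖ ^ 2)

/-- The sphere `𝕊` of imaginary units of the octonions. -/
def Sph : Set Oct := {I | I * I = -1}

/-- The slice complex plane `ℂ_I = ℝ + ℝ I ⊆ 𝕆`. -/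
def CI (I : Oct) : Set Oct := {z | ∃ s t : ℝ, z = s • (1 : Oct) + t • I}

end Oct

open Oct

/-- The point `x + y I ∈ ℂ_Iⁿ ⊆ 𝕆ⁿ`. -/
def aff {n : ℕ} (x y : Fin n → ℝ) (I : Oct) : Fin n → Oct :=
  fun m => x m • (1 : Oct) + y m • I

/-- The embedding `ℝⁿ ⊆ 𝕆ⁿ`. -/
def ofRealn {n : ℕ} (x : Fin n → ℝ) : Fin n → Oct := fun m => x m • (1 : Oct)

/-- The slice `ℂ_Iⁿ ⊆ 𝕆ⁿ`. -/
def slicen (n : ℕ) (I : Oct) : Set (Fin n → Oct) := {q | ∃ x y : Fin n → ℝ, q = aff x y I}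

/-- The `n`-dimensional quadratic cone `𝕆ₛⁿ = ⋃_{I ∈ 𝕊} ℂ_Iⁿ`. -/
def cone (n : ℕ) : Set (Fin n → Oct) := ⋃ I ∈ Sph, slicen n I

/-- The slice topology `τ_s`: a set is open iff its trace on every slice `ℂ_Iⁿ`
is open (expressed via the canonical parametrizations `(x,y) ↦ x + yI`). -/
def τs (n : ℕ) : TopologicalSpace (Fin n → Oct) :=
  ⨆ I : Sph, TopologicalSpace.coinduced
    (fun p : (Fin n → ℝ) × (Fin n → ℝ) => aff p.1 p.2 I.1) inferInstance

/-- A slice-open subset of the quadratic cone. -/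
def SliceOpen (n : ℕ) (Ω : Set (Fin n → Oct)) : Prop :=
  Ω ⊆ cone n ∧ IsOpen[τs n] Ω

/-- A slice-domain: a nonempty slice-connected slice-open subset of the cone. -/
def SliceDomain (n : ℕ) (Ω : Set (Fin n → Oct)) : Prop :=
  SliceOpen n Ω ∧ @IsConnected _ (τs n) Ω

/-- Real-connectedness: `Ω ∩ ℝⁿ` is a (pre)connected subset of `ℝⁿ`. -/
def RealConnected (n : ℕ) (Ω : Set (Fin n → Oct)) : Prop :=
  IsPreconnected {x : Fin n → ℝ | ofRealn x ∈ Ω}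

/-- Axially symmetric subsets of the cone. -/
def AxSymm (n : ℕ) (Ω : Set (Fin n → Oct)) : Prop :=
  ∀ (x y : Fin n → ℝ), ∀ I ∈ Sph, ∀ J ∈ Sph, aff x y I ∈ Ω → aff x y J ∈ Ω

/-- The upper half-space `ℝ²ⁿ₊`: pairs `(x,y)` with `y = 0` or the first
nonzero coordinate of `y` positive. -/
def pos2n (n : ℕ) : Set ((Fin n → ℝ) × (Fin n → ℝ)) :=
  {p | p.2 = 0 ∨ ∃ m : Fin n, 0 < p.2 m ∧ ∀ k : Fin n, k < m → p.2 k = 0}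

/-- `Ω_{s₁}`. -/
def s1 {n : ℕ} (Ω : Set (Fin n → Oct)) : Set ((Fin n → ℝ) × (Fin n → ℝ)) :=
  {p | ∃ I ∈ Sph, aff p.1 p.2 I ∈ Ω}

/-- `Ω_{s₂}`. -/
def s2 {n : ℕ} (Ω : Set (Fin n → Oct)) : Set ((Fin n → ℝ) × (Fin n → ℝ)) :=
  {p | ∃ J ∈ Sph, ∃ K ∈ Sph, J ≠ K ∧ aff p.1 p.2 J ∈ Ω ∧ aff p.1 p.2 K ∈ Ω}

/-- Slice functions: induced on `Ω_{s₂}⁺` by a pair `(F₁, F₂)` via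
`f(x + yI) = F₁(x,y) + I·F₂(x,y)`. -/
def IsSliceFun (n : ℕ) (Ω : Set (Fin n → Oct)) (f : (Fin n → Oct) → Oct) : Prop :=
  ∃ F₁ F₂ : (Fin n → ℝ) × (Fin n → ℝ) → Oct,
    ∀ x y : Fin n → ℝ, (x, y) ∈ s2 Ω ∩ pos2n n → ∀ I ∈ Sph, aff x y I ∈ Ω →
      f (aff x y I) = F₁ (x, y) + I * F₂ (x, y)

/-- Holomorphy of a function of `n` slice variables, read through the
parametrization `(x,y) ↦ x + yI`: continuous partial derivatives (i.e. `C¹`)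
and the Cauchy–Riemann equations `(∂/∂xₘ + I ∂/∂yₘ) g = 0` on `U`. -/
def Holo (n : ℕ) (I : Oct) (g : (Fin n → ℝ) × (Fin n → ℝ) → Oct)
    (U : Set ((Fin n → ℝ) × (Fin n → ℝ))) : Prop :=
  ContDiffOn ℝ 1 g U ∧
  ∀ p ∈ U, ∀ m : Fin n,
    fderiv ℝ g p (Pi.single m 1, 0) + I * fderiv ℝ g p (0, Pi.single m 1) = 0

/-- Weak slice regularity: each restriction `f|_{Ω ∩ ℂ_Iⁿ}` is holomorphic. -/
def WSliceReg (n : ℕ) (Ω : Set (Fin n → Oct)) (f : (Fin n → Oct) → Oct) : Prop :=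
  ∀ I ∈ Sph, Holo n I (fun p => f (aff p.1 p.2 I)) {p | aff p.1 p.2 I ∈ Ω}

/-- The complex structure `σ(a,b) = (−b,a)` on `𝕆²`. -/
def sigma2 : Oct × Oct → Oct × Oct := fun w => (-w.2, w.1)

/-- Holomorphic stem maps: `F : V → 𝕆²` extends to a `C¹` map `G` on an open
neighborhood `U ⊇ V` satisfying `(∂/∂xₘ + σ ∂/∂yₘ) G = 0` on `U`. -/
def StemHolo (n : ℕ) (V : Set ((Fin n → ℝ) × (Fin n → ℝ)))
    (F : (Fin n → ℝ) × (Fin n → ℝ) → Oct × Oct) : Prop :=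
  ∃ (U : Set ((Fin n → ℝ) × (Fin n → ℝ))) (G : (Fin n → ℝ) × (Fin n → ℝ) → Oct × Oct),
    IsOpen U ∧ V ⊆ U ∧ Set.EqOn G F V ∧ ContDiffOn ℝ 1 G U ∧
    ∀ p ∈ U, ∀ m : Fin n,
      fderiv ℝ G p (Pi.single m 1, 0) + sigma2 (fderiv ℝ G p (0, Pi.single m 1)) = 0

/-- Strong slice regularity: `f` is induced by a holomorphic stem map on `Ω_{s₁}`. -/
def SSliceReg (n : ℕ) (Ω : Set (Fin n → Oct)) (f : (Fin n → Oct) → Oct) : Prop :=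
  ∃ F : (Fin n → ℝ) × (Fin n → ℝ) → Oct × Oct, StemHolo n (s1 Ω) F ∧
    ∀ x y : Fin n → ℝ, ∀ I ∈ Sph, aff x y I ∈ Ω →
      f (aff x y I) = (F (x, y)).1 + I * (F (x, y)).2

/-- An s-basis `{I, J, K}` of the octonions. -/
def IsSBasis (I J K : Oct) : Prop :=
  I ∈ Sph ∧ J ∈ Sph ∧ K ∈ Sph ∧
  LinearIndependent ℝ ![(1 : Oct), I, J, I * J, K, J * K, I * K, (I * J) * K] ∧
  Submodule.span ℝ (Set.range ![(1 : Oct), I, J, I * J, K, J * K, I * K, (I * J) * K]) = ⊤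

/-- Iterated left multiplication `L_w^β = (L_{w₁})^{β₁} ∘ ⋯ ∘ (L_{wₙ})^{βₙ}`. -/
def Lpow {n : ℕ} (w : Fin n → Oct) (β : Fin n → ℕ) : Oct → Oct :=
  fun a => (List.finRange n).foldr (fun ℓ c => (fun o => w ℓ * o)^[β ℓ] c) a

/-- The `*`-power `(q − p)^{*α} a = ∑_{β ≤ α} C(α,β) L_q^β (L_{−p}^{α−β} a)`. -/
def starPow {n : ℕ} (p : Fin n → Oct) (α : Fin n → ℕ) (a : Oct) (q : Fin n → Oct) : Oct :=
  ∑ β ∈ Finset.Iic α, (∏ ℓ, (α ℓ).choose (β ℓ)) • Lpow q β (Lpow (-p) (α - β) a)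

/-- The `ℓ`-th slice derivative `∂_ℓ f (x + w) = (∂/∂x_ℓ) f (x + w)`. -/
def sderiv {n : ℕ} (ℓ : Fin n) (f : (Fin n → Oct) → Oct) : (Fin n → Oct) → Oct :=
  fun q => deriv (fun t : ℝ => f (fun m => q m + (if m = ℓ then t else 0) • (1 : Oct))) 0

/-- The iterated slice derivative `f^{(α)} = (∂₁)^{α₁} ⋯ (∂ₙ)^{αₙ} f`. -/
def sderivMulti {n : ℕ} (α : Fin n → ℕ) (f : (Fin n → Oct) → Oct) : (Fin n → Oct) → Oct :=
  (List.finRange n).foldr (fun ℓ g => (sderiv ℓ)^[α ℓ] g) f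

/-- The slice-polydisc `P̃(q₀, r)` (relative to `I ∈ 𝕊` with `q₀ ∈ ℂ_Iⁿ`):
points `x + yJ` with `x ± yI` in the closed polydisc `P_I(q₀, r)`. -/
def polyDisc {n : ℕ} (q₀ : Fin n → Oct) (I : Oct) (r : Fin n → ℝ) : Set (Fin n → Oct) :=
  {q | ∃ x y : Fin n → ℝ, ∃ J ∈ Sph, q = aff x y J ∧
        (∀ ℓ, ‖aff x y I ℓ - q₀ ℓ‖ ≤ r ℓ) ∧ (∀ ℓ, ‖aff x (-y) I ℓ - q₀ ℓ‖ ≤ r ℓ)}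

/-! The difference `d = f - g` is weak slice regular (a holomorphic stem map makes every slice
restriction holomorphic), so it suffices to show that such a `d`, vanishing near a point of one
slice, vanishes on `Ω`. Let `A` be the set of points of `Ω` near which `d` vanishes on some slice
through them. On a fixed slice `ℂ_Jⁿ` the one-variable identity theorem, applied along the complex
lines `q + ℂ u`, shows that the trace of `A` is open and relatively closed in `Ω_J`. Two slices
`ℂ_Jⁿ`, `ℂ_Kⁿ` with `K ≠ ±J` meet only in `ℝⁿ`, and vanishing on a real neighbourhood spreads to a
complex one along the lines `x + ℂ (y, 0)`. Hence `A` and `Ω \ A` are slice-open, and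
slice-connectedness gives `A = Ω`. -/

namespace Oct

@[simp] lemma c1_mk (a b : ℍ) : c1 (mk a b) = a := rfl
@[simp] lemma c2_mk (a b : ℍ) : c2 (mk a b) = b := rfl

@[ext] lemma ext {p q : Oct} (h1 : c1 p = c1 q) (h2 : c2 p = c2 q) : p = q := by
  change mk (c1 p) (c2 p) = mk (c1 q) (c2 q)
  rw [h1, h2]

@[simp] lemma c1_add (p q : Oct) : c1 (p + q) = c1 p + c1 q := rfl
@[simp] lemma c2_add (p q : Oct) : c2 (p + q) = c2 p + c2 q := rfl
@[simp] lemma c1_neg (p : Oct) : c1 (-p) = -c1 p := rfl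
@[simp] lemma c2_neg (p : Oct) : c2 (-p) = -c2 p := rfl
@[simp] lemma c1_smul (t : ℝ) (p : Oct) : c1 (t • p) = t • c1 p := rfl
@[simp] lemma c2_smul (t : ℝ) (p : Oct) : c2 (t • p) = t • c2 p := rfl
@[simp] lemma c1_zero : c1 0 = 0 := rfl
@[simp] lemma c2_zero : c2 0 = 0 := rfl
@[simp] lemma c1_one : c1 1 = 1 := rfl
@[simp] lemma c2_one : c2 1 = 0 := rfl
@[simp] lemma c1_mul (p q : Oct) : c1 (p * q) = c1 p * c1 q - star (c2 q) * c2 p := rfl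
@[simp] lemma c2_mul (p q : Oct) : c2 (p * q) = c2 q * c1 p + c2 p * star (c1 q) := rfl

instance : NeZero (1 : Oct) := ⟨fun h => one_ne_zero (congrArg c1 h)⟩

instance : IsScalarTower ℝ Oct Oct := ⟨fun t p q => by ext1 <;> simp [smul_sub]⟩

instance : SMulCommClass ℝ Oct Oct := ⟨fun t p q => by ext1 <;> simp [smul_sub]⟩

def mulLeft (I : Oct) : Oct →L[ℝ] Oct :=
  LinearMap.toContinuousLinearMap
    { toFun := fun x => I * x
      map_add' := fun p q => by ext1 <;> simp <;> noncomm_ring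
      map_smul' := fun t p => mul_smul_comm t I p }

@[simp] lemma mulLeft_apply (I x : Oct) : mulLeft I x = I * x := rfl

lemma ne_zero_of_mem_Sph {I : Oct} (hI : I ∈ Sph) : I ≠ 0 := by
  rintro rfl
  have h : (0 : Oct) * 0 = -1 := hI
  exact one_ne_zero (neg_eq_zero.mp (h.symm.trans (by ext1 <;> simp)))

lemma Sph_nonempty : Sph.Nonempty :=
  ⟨mk 0 1, by show _ = -1; ext1 <;> simp⟩

def re (p : Oct) : ℝ := (c1 p).re

lemma re_eq_zero_of_mem_Sph {I : Oct} (hI : I ∈ Sph) : re I = 0 := by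
  have h1 := congrArg c1 (show I * I = -1 from hI)
  have h2 := congrArg c2 (show I * I = -1 from hI)
  simp [Quaternion.ext_iff] at h1 h2
  obtain ⟨h10, h11, h12, h13⟩ := h1
  obtain ⟨h20, h21, h22, h23⟩ := h2
  -- if `re I ≠ 0`, the imaginary components of `I` all vanish and `(re I)² = -1`
  by_contra ha
  have cancel : ∀ x : ℝ, re I * x = 0 → x = 0 := fun x hx =>
    (mul_eq_zero.mp hx).resolve_left ha
  simp only [re] at cancel ha
  have := cancel _ (by linarith : (c1 I).re * (c2 I).imI = 0)
  have := cancel _ (by linarith : (c1 I).re * (c2 I).imJ = 0)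
  have := cancel _ (by linarith : (c1 I).re * (c2 I).imK = 0)
  have := cancel _ (by linarith : (c1 I).re * (c1 I).imI = 0)
  have := cancel _ (by linarith : (c1 I).re * (c1 I).imJ = 0)
  have := cancel _ (by linarith : (c1 I).re * (c1 I).imK = 0)
  simp_all
  nlinarith

lemma re_smul_one_add_smul {I : Oct} (hI : I ∈ Sph) (s t : ℝ) : re (s • 1 + t • I) = s := by
  have := re_eq_zero_of_mem_Sph hI
  simp_all [re]

lemma mul_mul_self_of_mem_Sph {I : Oct} (hI : I ∈ Sph) (x : Oct) : I * (I * x) = -x := by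
  have hA : star (c1 I) = -c1 I := Quaternion.star_eq_neg.mpr (re_eq_zero_of_mem_Sph hI)
  have hsq : c1 I * c1 I - star (c2 I) * c2 I = -1 := congrArg c1 hI
  have hB : star (c2 I) * c2 I = ((Quaternion.normSq (c2 I) : ℝ) : ℍ) :=
    Quaternion.star_mul_self _
  have hB' : c2 I * star (c2 I) = ((Quaternion.normSq (c2 I) : ℝ) : ℍ) :=
    Quaternion.self_mul_star _
  rw [hB] at hsq
  ext1
  · calc c1 (I * (I * x))
        = (c1 I * c1 I) * c1 x - c1 x * (star (c2 I) * c2 I) := by simp [hA]; noncomm_ring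
      _ = -c1 x := by
        rw [hB, ← Quaternion.coe_commutes, ← sub_mul, hsq, neg_one_mul]
  · calc c2 (I * (I * x))
        = c2 x * (c1 I * c1 I) - (c2 I * star (c2 I)) * c2 x := by simp [hA]; noncomm_ring
      _ = -c2 x := by
        rw [hB', Quaternion.coe_commutes, ← mul_sub, hsq, mul_neg_one]

lemma eq_of_smul_one_add_smul_eq {I J : Oct} (hI : I ∈ Sph) (hJ : J ∈ Sph) {s t s' t' : ℝ}
    (h : s • 1 + t • I = s' • 1 + t' • J) : s = s' ∧ t • I = t' • J := by
  have hs : s = s' := by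
    rw [← re_smul_one_add_smul hI s t, h, re_smul_one_add_smul hJ]
  subst hs
  exact ⟨rfl, add_left_cancel h⟩

lemma eq_zero_of_smul_eq_smul {I J : Oct} (hI : I ∈ Sph) (hJ : J ∈ Sph) (hIJ : I ≠ J)
    (hIJ' : I ≠ -J) {s t : ℝ} (h : s • I = t • J) : s = 0 := by
  by_contra hs
  have hIc : I = (t / s) • J := by rw [div_eq_inv_mul, mul_smul, ← h, inv_smul_smul₀ hs]
  have hsq : (t / s) ^ 2 = 1 := by
    have : (1 : ℝ) • (-1 : Oct) = ((t / s) ^ 2) • (-1) := by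
      calc (1 : ℝ) • (-1 : Oct) = I * I := by rw [one_smul]; exact hI.symm
      _ = ((t / s) ^ 2) • (J * J) := by rw [hIc, smul_mul_assoc, mul_smul_comm, smul_smul, sq]
      _ = ((t / s) ^ 2) • (-1) := by rw [show J * J = -1 from hJ]
    exact (smul_left_injective ℝ (neg_ne_zero.mpr one_ne_zero) this).symm
  rcases sq_eq_one_iff.mp hsq with h1 | h1
  · exact hIJ (by rw [hIc, h1, one_smul])
  · exact hIJ' (by rw [hIc, h1, neg_one_smul])

end Oct

section SliceParam

variable {n : ℕ}

def sliceParam (I : Oct) (p : (Fin n → ℝ) × (Fin n → ℝ)) : Fin n → Oct := aff p.1 p.2 I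

lemma aff_zero (x : Fin n → ℝ) (I : Oct) : aff x 0 I = ofRealn x := by
  funext m; simp [aff, ofRealn]

lemma sliceParam_neg (I : Oct) (p : (Fin n → ℝ) × (Fin n → ℝ)) :
    sliceParam (-I) p = sliceParam I (p.1, -p.2) := by
  funext m; simp [sliceParam, aff]

lemma isOpen_τs_iff {U : Set (Fin n → Oct)} :
    IsOpen[τs n] U ↔ ∀ I ∈ Sph, IsOpen (sliceParam I ⁻¹' U) := by
  rw [τs, isOpen_iSup_iff]
  simp only [isOpen_coinduced, Subtype.forall]
  rfl

lemma sliceParam_eq_sliceParam {I J : Oct} (hI : I ∈ Sph) (hJ : J ∈ Sph)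
    {p q : (Fin n → ℝ) × (Fin n → ℝ)} (h : sliceParam I p = sliceParam J q) :
    p.1 = q.1 ∧ ∀ m, p.2 m • I = q.2 m • J := by
  have hm := fun m => eq_of_smul_one_add_smul_eq hI hJ (congrFun h m)
  exact ⟨funext fun m => (hm m).1, fun m => (hm m).2⟩

lemma sliceParam_injective {I : Oct} (hI : I ∈ Sph) :
    Function.Injective (sliceParam (n := n) I) := by
  intro p q h
  obtain ⟨h1, h2⟩ := sliceParam_eq_sliceParam hI hI h
  exact Prod.ext h1 (funext fun m => smul_left_injective ℝ (ne_zero_of_mem_Sph hI) (h2 m))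

lemma sliceParam_eq_sliceParam_of_ne {I J : Oct} (hI : I ∈ Sph) (hJ : J ∈ Sph) (hIJ : I ≠ J)
    (hIJ' : I ≠ -J) {p q : (Fin n → ℝ) × (Fin n → ℝ)}
    (h : sliceParam I p = sliceParam J q) : p.1 = q.1 ∧ p.2 = 0 ∧ q.2 = 0 := by
  obtain ⟨h1, h2⟩ := sliceParam_eq_sliceParam hI hJ h
  have hJI' : J ≠ -I := fun e => hIJ' (by rw [e, neg_neg])
  exact ⟨h1, funext fun m => eq_zero_of_smul_eq_smul hI hJ hIJ hIJ' (h2 m),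
    funext fun m => eq_zero_of_smul_eq_smul hJ hI hIJ.symm hJI' (h2 m).symm⟩

end SliceParam

section ComplexLine

variable {n : ℕ}

/-- Multiplication by `i` under `ℂⁿ ≅ ℝⁿ × ℝⁿ`. -/
def rotate : ((Fin n → ℝ) × (Fin n → ℝ)) →L[ℝ] ((Fin n → ℝ) × (Fin n → ℝ)) :=
  (-ContinuousLinearMap.snd ℝ _ _).prod (ContinuousLinearMap.fst ℝ _ _)

@[simp] lemma rotate_apply (p : (Fin n → ℝ) × (Fin n → ℝ)) : rotate p = (-p.2, p.1) := rfl

lemma map_rotate_of_cauchyRiemann {I : Oct} (hI : I ∈ Sph)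
    {D : ((Fin n → ℝ) × (Fin n → ℝ)) →L[ℝ] Oct}
    (hcr : ∀ m, D (Pi.single m 1, 0) + I * D (0, Pi.single m 1) = 0)
    (v : (Fin n → ℝ) × (Fin n → ℝ)) : D (rotate v) = I * D v := by
  suffices h :
      ((D.comp rotate : _ →L[ℝ] Oct) : _ →ₗ[ℝ] Oct) = ((mulLeft I).comp D : _ →L[ℝ] Oct)
    from LinearMap.congr_fun h v
  refine LinearMap.prod_ext (LinearMap.pi_ext' fun m => LinearMap.ext_ring ?_)
    (LinearMap.pi_ext' fun m => LinearMap.ext_ring ?_)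
  all_goals simp only [LinearMap.coe_comp, Function.comp_apply, LinearMap.inl_apply,
    LinearMap.inr_apply, LinearMap.coe_single, ContinuousLinearMap.coe_coe,
    ContinuousLinearMap.comp_apply, rotate_apply, mulLeft_apply, neg_zero]
  · rw [eq_neg_of_add_eq_zero_left (hcr m), ← mulLeft_apply, map_neg, mulLeft_apply,
      mul_mul_self_of_mem_Sph hI, neg_neg]
  · rw [show ((-Pi.single m 1, 0) : (Fin n → ℝ) × (Fin n → ℝ)) = -(Pi.single m 1, 0) by simp,
      map_neg, neg_eq_of_add_eq_zero_right (hcr m)]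

def complexLineCLM (u : (Fin n → ℝ) × (Fin n → ℝ)) :
    ℂ →L[ℝ] (Fin n → ℝ) × (Fin n → ℝ) :=
  Complex.reCLM.smulRight u + Complex.imCLM.smulRight (rotate u)

def complexLine (p₀ u : (Fin n → ℝ) × (Fin n → ℝ)) (z : ℂ) :
    (Fin n → ℝ) × (Fin n → ℝ) :=
  p₀ + complexLineCLM u z

@[simp] lemma complexLine_apply (p₀ u : (Fin n → ℝ) × (Fin n → ℝ)) (z : ℂ) :
    complexLine p₀ u z = p₀ + z.re • u + z.im • rotate u := by
  simp [complexLine, complexLineCLM, add_assoc]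

lemma continuous_complexLine (p₀ u : (Fin n → ℝ) × (Fin n → ℝ)) :
    Continuous (complexLine p₀ u) :=
  continuous_const.add (complexLineCLM u).continuous

lemma Convex.complexLine_preimage {C : Set ((Fin n → ℝ) × (Fin n → ℝ))} (hC : Convex ℝ C)
    (p₀ u : (Fin n → ℝ) × (Fin n → ℝ)) : Convex ℝ (complexLine p₀ u ⁻¹' C) :=
  (hC.translate_preimage_right p₀).linear_preimage (complexLineCLM u).toLinearMap

def complexify (I : Oct) (l : Oct →L[ℝ] ℝ) : Oct →L[ℝ] ℂ :=
  Complex.ofRealCLM.comp l - Complex.I • Complex.ofRealCLM.comp (l.comp (mulLeft I))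

lemma complexify_apply (I : Oct) (l : Oct →L[ℝ] ℝ) (v : Oct) :
    complexify I l v = l v - Complex.I * l (I * v) := by
  simp [complexify]

@[simp] lemma re_complexify (I : Oct) (l : Oct →L[ℝ] ℝ) (v : Oct) :
    (complexify I l v).re = l v := by
  simp [complexify_apply]

lemma complexify_mul {I : Oct} (hI : I ∈ Sph) (l : Oct →L[ℝ] ℝ) (v : Oct) :
    complexify I l (I * v) = Complex.I * complexify I l v := by
  rw [complexify_apply, complexify_apply, mul_mul_self_of_mem_Sph hI, map_neg, Complex.ofReal_neg,
    mul_sub, ← mul_assoc, Complex.I_mul_I]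
  ring

lemma differentiableAt_complexify_comp_complexLine {I : Oct} (hI : I ∈ Sph)
    (l : Oct →L[ℝ] ℝ) {h : (Fin n → ℝ) × (Fin n → ℝ) → Oct}
    {p₀ u : (Fin n → ℝ) × (Fin n → ℝ)} {z : ℂ} {D : ((Fin n → ℝ) × (Fin n → ℝ)) →L[ℝ] Oct}
    (hD : HasFDerivAt h D (complexLine p₀ u z))
    (hcr : ∀ m, D (Pi.single m 1, 0) + I * D (0, Pi.single m 1) = 0) :
    DifferentiableAt ℂ (fun w => complexify I l (h (complexLine p₀ u w))) z := by
  have hline : HasFDerivAt (complexLine p₀ u) (complexLineCLM u) z :=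
    (complexLineCLM u).hasFDerivAt.const_add p₀
  have hcomp := (complexify I l).hasFDerivAt.comp z (hD.comp z hline)
  refine (hasFDerivAt_of_restrictScalars ℝ hcomp ?_).differentiableAt
    (f' := ContinuousLinearMap.toSpanSingleton ℂ (complexify I l (D u)))
  ext1 w
  simp only [ContinuousLinearMap.coe_restrictScalars', ContinuousLinearMap.toSpanSingleton_apply,
    ContinuousLinearMap.comp_apply, complexLineCLM, add_apply,
    ContinuousLinearMap.smulRight_apply, Complex.reCLM_apply, Complex.imCLM_apply, map_add,
    map_smul, map_rotate_of_cauchyRiemann hI hcr, complexify_mul hI, Complex.real_smul]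
  conv_lhs => rw [← Complex.re_add_im w]
  ring

end ComplexLine

section Holo

open Metric Filter

variable {n : ℕ} {I : Oct} {h : (Fin n → ℝ) × (Fin n → ℝ) → Oct}
  {O : Set ((Fin n → ℝ) × (Fin n → ℝ))}

lemma Holo.mono {O' : Set ((Fin n → ℝ) × (Fin n → ℝ))} (hh : Holo n I h O)
    (hO' : O' ⊆ O) : Holo n I h O' :=
  ⟨hh.1.mono hO', fun p hp => hh.2 p (hO' hp)⟩

lemma Holo.hasFDerivAt (hO : IsOpen O) (hh : Holo n I h O) {p : (Fin n → ℝ) × (Fin n → ℝ)}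
    (hp : p ∈ O) : HasFDerivAt h (fderiv ℝ h p) p :=
  ((hh.1.differentiableOn one_ne_zero).differentiableAt (hO.mem_nhds hp)).hasFDerivAt

lemma Holo.sub {g : (Fin n → ℝ) × (Fin n → ℝ) → Oct} (hO : IsOpen O) (hh : Holo n I h O)
    (hg : Holo n I g O) : Holo n I (h - g) O := by
  refine ⟨hh.1.sub hg.1, fun p hp m => ?_⟩
  rw [((hh.hasFDerivAt hO hp).sub (hg.hasFDerivAt hO hp)).fderiv]
  simp only [sub_apply, ← mulLeft_apply, map_sub]
  rw [sub_add_sub_comm]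
  simp only [mulLeft_apply, hh.2 p hp m, hg.2 p hp m, sub_zero]

theorem Holo.eq_zero_on_complexLine (hI : I ∈ Sph) {C : Set ((Fin n → ℝ) × (Fin n → ℝ))}
    (hC : Convex ℝ C) (hCo : IsOpen C) (hh : Holo n I h C)
    {p₀ u : (Fin n → ℝ) × (Fin n → ℝ)}
    {z₀ z₁ : ℂ} (h₀ : complexLine p₀ u z₀ ∈ C) (h₁ : complexLine p₀ u z₁ ∈ C)
    (hfreq : ∃ᶠ z in 𝓝[≠] z₀, h (complexLine p₀ u z) = 0) :
    h (complexLine p₀ u z₁) = 0 := by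
  -- `𝕆` is no complex vector space: test against real functionals `l` instead, for which
  -- `complexify I l ∘ h` is holomorphic along the line and has real part `l ∘ h`
  rw [← Module.forall_dual_apply_eq_zero_iff ℝ]
  intro l
  have hT : IsOpen (complexLine p₀ u ⁻¹' C) := hCo.preimage (continuous_complexLine p₀ u)
  have hφ : DifferentiableOn ℂ (fun z => complexify I (LinearMap.toContinuousLinearMap l)
      (h (complexLine p₀ u z))) (complexLine p₀ u ⁻¹' C) := fun z hz =>
    (differentiableAt_complexify_comp_complexLine hI _ (hh.hasFDerivAt hCo hz)
      (hh.2 _ hz)).differentiableWithinAt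
  have hzero := (hφ.analyticOnNhd hT).eqOn_zero_of_preconnected_of_frequently_eq_zero
    (hC.complexLine_preimage p₀ u).isPreconnected h₀
    (hfreq.mono fun z hz => by simp only [hz, map_zero]) h₁
  simpa using congrArg Complex.re hzero

theorem Holo.eqOn_zero_ball (hI : I ∈ Sph) {c q : (Fin n → ℝ) × (Fin n → ℝ)} {r : ℝ}
    (hh : Holo n I h (ball c r)) (hq : q ∈ ball c r) (hzero : h =ᶠ[𝓝 q] 0) :
    Set.EqOn h 0 (ball c r) := by
  intro w hw
  have hline : Tendsto (complexLine q (w - q)) (𝓝 0) (𝓝 q) := by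
    simpa using (continuous_complexLine q (w - q)).tendsto 0
  simpa using hh.eq_zero_on_complexLine hI (convex_ball c r) isOpen_ball (z₀ := 0) (z₁ := 1)
    (by simpa using hq) (by simpa using hw)
    ((hline.eventually hzero).filter_mono nhdsWithin_le_nhds).frequently

lemma Holo.isOpen_diff_setOf_eventuallyEq_zero (hI : I ∈ Sph) (hO : IsOpen O) (hh : Holo n I h O) :
    IsOpen (O \ {p | h =ᶠ[𝓝 p] 0}) := by
  refine isOpen_iff_forall_mem_open.mpr fun p ⟨hpO, hp⟩ => ?_
  obtain ⟨ε, hε, hεO⟩ := isOpen_iff.mp hO p hpO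
  refine ⟨ball p ε, fun w hw => ⟨hεO hw, fun hwz => hp ?_⟩, isOpen_ball,
    mem_ball_self hε⟩
  exact eventuallyEq_of_mem (ball_mem_nhds p hε) ((hh.mono hεO).eqOn_zero_ball hI hw hwz)

theorem Holo.eventuallyEq_zero_of_real (hI : I ∈ Sph) (hO : IsOpen O) (hh : Holo n I h O)
    {x : Fin n → ℝ} (hx : (x, 0) ∈ O) (hreal : (fun x' => h (x', 0)) =ᶠ[𝓝 x] 0) :
    h =ᶠ[𝓝 (x, 0)] 0 := by
  obtain ⟨ε, hε, hεO⟩ := isOpen_iff.mp hO _ hx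
  obtain ⟨δ, hδ, hδz⟩ := eventually_nhds_iff_ball.mp hreal
  filter_upwards [ball_mem_nhds _ (lt_min hε hδ)] with w hw
  have hw₁ : (w.1, 0) ∈ ball ((x, 0) : (Fin n → ℝ) × (Fin n → ℝ)) (min ε δ) := by
    simp only [mem_ball, Prod.dist_eq, dist_self] at hw ⊢
    exact lt_of_le_of_lt (max_le (le_max_left _ _) (dist_nonneg.trans (le_max_left _ _))) hw
  have hx₁ : w.1 ∈ ball x δ := by
    simp only [mem_ball, Prod.dist_eq, dist_self] at hw₁ ⊢
    exact lt_of_le_of_lt (le_max_left _ _) (lt_of_lt_of_le hw₁ (min_le_right _ _))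
  -- the line through `(w.1, 0)` in the direction `(w.2, 0)` is real for real parameters and
  -- reaches `w` at `i`
  have hreal' : ∀ᶠ t : ℝ in 𝓝 0, h (complexLine (w.1, 0) (w.2, 0) t) = 0 := by
    have hc : Tendsto (fun t : ℝ => w.1 + t • w.2) (𝓝 0) (𝓝 w.1) :=
      (by fun_prop : Continuous fun t : ℝ => w.1 + t • w.2).tendsto' 0 w.1 (by simp)
    filter_upwards [hc.eventually (isOpen_ball.mem_nhds hx₁)] with t ht
    simpa using hδz _ ht
  have hofReal : Tendsto ((↑) : ℝ → ℂ) (𝓝[≠] 0) (𝓝[≠] 0) := by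
    simpa using Complex.continuous_ofReal.continuousWithinAt.tendsto_nhdsWithin
      (fun t ht => by simpa using ht) (x := 0) (s := {0}ᶜ) (t := {0}ᶜ)
  simpa using ((hh.mono hεO).mono (ball_subset_ball (min_le_left _ _))).eq_zero_on_complexLine hI
    (convex_ball _ _) isOpen_ball (z₀ := 0) (z₁ := Complex.I) (by simpa using hw₁)
    (by simpa using hw)
    (hofReal.frequently (hreal'.filter_mono nhdsWithin_le_nhds).frequently)

end Holo

section SliceRegular

open Filter

variable {n : ℕ} {Ω : Set (Fin n → Oct)}

lemma WSliceReg.sub {f g : (Fin n → Oct) → Oct} (hΩ : IsOpen[τs n] Ω) (hf : WSliceReg n Ω f)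
    (hg : WSliceReg n Ω g) : WSliceReg n Ω (f - g) :=
  fun I hI => (hf I hI).sub (isOpen_τs_iff.mp hΩ I hI) (hg I hI)

lemma SSliceReg.wSliceReg {f : (Fin n → Oct) → Oct} (hΩ : IsOpen[τs n] Ω)
    (hf : SSliceReg n Ω f) : WSliceReg n Ω f := by
  obtain ⟨F, ⟨U, G, hU, hsU, hGF, hG, hGcr⟩, hfF⟩ := hf
  intro K hK
  let combine : Oct × Oct →L[ℝ] Oct :=
    ContinuousLinearMap.fst ℝ Oct Oct + (mulLeft K).comp (ContinuousLinearMap.snd ℝ Oct Oct)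
  have hUK : sliceParam K ⁻¹' Ω ⊆ U := fun p hp => hsU ⟨K, hK, hp⟩
  have heq : Set.EqOn (fun p => f (aff p.1 p.2 K)) (combine ∘ G) (sliceParam K ⁻¹' Ω) :=
    fun p hp => by simp [combine, hfF p.1 p.2 K hK hp, hGF ⟨K, hK, hp⟩]
  refine ⟨(combine.contDiff.comp_contDiffOn (hG.mono hUK)).congr heq, fun p hp m => ?_⟩
  have hGd : HasFDerivAt G (fderiv ℝ G p) p :=
    ((hG.differentiableOn one_ne_zero).differentiableAt (hU.mem_nhds (hUK hp))).hasFDerivAt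
  rw [(heq.eventuallyEq_of_mem ((isOpen_τs_iff.mp hΩ K hK).mem_nhds hp)).fderiv_eq,
    (combine.hasFDerivAt.comp p hGd).fderiv]
  obtain ⟨h1, h2⟩ := Prod.ext_iff.mp (hGcr p (hUK hp) m)
  simp only [sigma2, Prod.fst_add, Prod.snd_add, Prod.fst_zero, Prod.snd_zero] at h1 h2
  simp only [ContinuousLinearMap.comp_apply, combine, add_apply,
    ContinuousLinearMap.coe_fst', ContinuousLinearMap.coe_snd', mulLeft_apply]
  rw [add_neg_eq_zero.mp h1, eq_neg_of_add_eq_zero_left h2, ← mulLeft_apply, ← mulLeft_apply,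
    map_add, map_neg, mulLeft_apply, mulLeft_apply, mul_mul_self_of_mem_Sph hK]
  abel

def sliceZeroGerms (d : (Fin n → Oct) → Oct) : Set (Fin n → Oct) :=
  {q | ∃ K ∈ Sph, ∃ p, sliceParam K p = q ∧ d ∘ sliceParam K =ᶠ[𝓝 p] 0}

/-- Two slices through a point are either `±J`, related by the reflection `y ↦ -y`, or meet
only in `ℝⁿ`, where `Holo.eventuallyEq_zero_of_real` applies. -/
lemma sliceParam_preimage_inter_sliceZeroGerms {d : (Fin n → Oct) → Oct}
    (hΩ : IsOpen[τs n] Ω) (hd : WSliceReg n Ω d) {J : Oct} (hJ : J ∈ Sph) :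
    sliceParam J ⁻¹' Ω ∩ sliceParam J ⁻¹' sliceZeroGerms d =
      sliceParam J ⁻¹' Ω ∩ {p | d ∘ sliceParam J =ᶠ[𝓝 p] 0} := by
  ext p
  refine ⟨fun ⟨hpΩ, K, hK, p', hp', hzero⟩ => ⟨hpΩ, ?_⟩,
    fun ⟨hpΩ, hz⟩ => ⟨hpΩ, J, hJ, p, rfl, hz⟩⟩
  by_cases hKJ : K = J
  · subst hKJ
    rwa [← sliceParam_injective hK hp']
  by_cases hKJ' : K = -J
  · subst hKJ'
    rw [sliceParam_neg] at hp'
    have hσ : d ∘ sliceParam J = (d ∘ sliceParam (-J)) ∘ fun q => (q.1, -q.2) := by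
      ext1 q; simp [sliceParam_neg]
    rw [hσ]
    refine hzero.comp_tendsto ?_
    rw [← sliceParam_injective hJ hp']
    exact (by fun_prop : Continuous fun q : (Fin n → ℝ) × (Fin n → ℝ) => (q.1, -q.2)).tendsto'
      _ _ (by simp)
  obtain ⟨hx, hy', hy⟩ := sliceParam_eq_sliceParam_of_ne hK hJ hKJ hKJ' hp'
  obtain ⟨x, y⟩ := p
  obtain ⟨x', y'⟩ := p'
  obtain ⟨rfl, rfl, rfl⟩ : x' = x ∧ y' = 0 ∧ y = 0 := ⟨hx, hy', hy⟩
  refine (hd J hJ).eventuallyEq_zero_of_real hJ (isOpen_τs_iff.mp hΩ J hJ) hpΩ ?_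
  have hreal := hzero.comp_tendsto
    ((by fun_prop : Continuous fun x : Fin n → ℝ => (x, (0 : Fin n → ℝ))).tendsto _)
  simp only [Function.comp_def, sliceParam, aff_zero] at hreal ⊢
  exact hreal

theorem WSliceReg.eq_zero {d : (Fin n → Oct) → Oct} (hΩ : IsOpen[τs n] Ω)
    (hconn : @IsPreconnected _ (τs n) Ω) (hd : WSliceReg n Ω d) {I : Oct} (hI : I ∈ Sph)
    {p : (Fin n → ℝ) × (Fin n → ℝ)} (hp : sliceParam I p ∈ Ω)
    (hzero : d ∘ sliceParam I =ᶠ[𝓝 p] 0) : ∀ q ∈ Ω, d q = 0 := by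
  have hopen : IsOpen[τs n] (Ω ∩ sliceZeroGerms d) := isOpen_τs_iff.mpr fun J hJ => by
    rw [Set.preimage_inter, sliceParam_preimage_inter_sliceZeroGerms hΩ hd hJ]
    exact (isOpen_τs_iff.mp hΩ J hJ).inter isOpen_setOfPred_eventually_nhds
  have hopen' : IsOpen[τs n] (Ω \ sliceZeroGerms d) := isOpen_τs_iff.mpr fun J hJ => by
    rw [Set.preimage_sdiff, ← Set.sdiff_self_inter,
      sliceParam_preimage_inter_sliceZeroGerms hΩ hd hJ, Set.sdiff_self_inter]
    exact (hd J hJ).isOpen_diff_setOf_eventuallyEq_zero hJ (isOpen_τs_iff.mp hΩ J hJ)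
  have hsub : Ω ⊆ Ω ∩ sliceZeroGerms d :=
    @IsPreconnected.subset_left_of_subset_union _ (τs n) _ _ _ hopen hopen'
      Set.disjoint_sdiff_inter.symm
      (fun q hq => by by_cases h : q ∈ sliceZeroGerms d <;> simp [*])
      ⟨sliceParam I p, hp, hp, I, hI, p, rfl, hzero⟩ hconn
  intro q hq
  obtain ⟨-, K, hK, p, rfl, hz⟩ := hsub hq
  exact hz.eq_of_nhds

end SliceRegular

theorem identity_principle_general (n : ℕ)
    (Ω : Set (Fin n → Oct)) (hΩ : SliceDomain n Ω)
    (f g : (Fin n → Oct) → Oct)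
    (hreg : (WSliceReg n Ω f ∧ WSliceReg n Ω g) ∨ (SSliceReg n Ω f ∧ SSliceReg n Ω g))
    (hcoin :
      (∃ I ∈ Sph, ∃ V : Set ((Fin n → ℝ) × (Fin n → ℝ)), V.Nonempty ∧ IsOpen V ∧
        (∀ p ∈ V, aff p.1 p.2 I ∈ Ω) ∧
        ∀ p ∈ V, f (aff p.1 p.2 I) = g (aff p.1 p.2 I)) ∨
      (∃ V : Set (Fin n → ℝ), V.Nonempty ∧ IsOpen V ∧ (∀ x ∈ V, ofRealn x ∈ Ω) ∧
        ∀ x ∈ V, f (ofRealn x) = g (ofRealn x))) :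
    ∀ q ∈ Ω, f q = g q := by
  have hΩo : IsOpen[τs n] Ω := hΩ.1.2
  obtain ⟨hf, hg⟩ : WSliceReg n Ω f ∧ WSliceReg n Ω g :=
    hreg.elim id fun h => ⟨h.1.wSliceReg hΩo, h.2.wSliceReg hΩo⟩
  have hd := hf.sub hΩo hg
  obtain ⟨I, hI, p, hp, hzero⟩ :
      ∃ I ∈ Sph, ∃ p, sliceParam I p ∈ Ω ∧ (f - g) ∘ sliceParam I =ᶠ[𝓝 p] 0 := by
    rcases hcoin with ⟨I, hI, V, ⟨p, hpV⟩, hVo, hVΩ, hVeq⟩ | ⟨V, ⟨x, hxV⟩, hVo, hVΩ, hVeq⟩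
    · exact ⟨I, hI, p, hVΩ p hpV, Filter.eventuallyEq_of_mem (hVo.mem_nhds hpV) fun q hq =>
        sub_eq_zero.mpr (hVeq q hq)⟩
    · obtain ⟨I, hI⟩ := Oct.Sph_nonempty
      have hx : aff x 0 I ∈ Ω := by rw [aff_zero]; exact hVΩ x hxV
      refine ⟨I, hI, (x, 0), hx,
        (hd I hI).eventuallyEq_zero_of_real hI (isOpen_τs_iff.mp hΩo I hI) hx ?_⟩
      filter_upwards [hVo.mem_nhds hxV] with x' hx'
      simpa [aff_zero, sub_eq_zero] using hVeq x' hx'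
  have hconn : @IsPreconnected _ (τs n) Ω := @IsConnected.isPreconnected _ (τs n) _ hΩ.2
  exact fun q hq => sub_eq_zero.mp (hd.eq_zero hΩo hconn hI hp hzero q hq)

/-- **Identity Principle.** Two functions on a slice-domain,
both weak slice regular or both strong slice regular, coinciding on a nonempty
open subset of a slice `Ω_I` (or of `Ω ∩ ℝⁿ`), coincide on all of `Ω`. -/
theorem identity_principle (n : ℕ) (hn : 1 ≤ n)
    (Ω : Set (Fin n → Oct)) (hΩ : SliceDomain n Ω)
    (f g : (Fin n → Oct) → Oct)
    (hreg : (WSliceReg n Ω f ∧ WSliceReg n Ω g) ∨ (SSliceReg n Ω f ∧ SSliceReg n Ω g))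
    (hcoin :
      (∃ I ∈ Sph, ∃ V : Set ((Fin n → ℝ) × (Fin n → ℝ)), V.Nonempty ∧ IsOpen V ∧
        (∀ p ∈ V, aff p.1 p.2 I ∈ Ω) ∧
        ∀ p ∈ V, f (aff p.1 p.2 I) = g (aff p.1 p.2 I)) ∨
      (∃ V : Set (Fin n → ℝ), V.Nonempty ∧ IsOpen V ∧ (∀ x ∈ V, ofRealn x ∈ Ω) ∧
        ∀ x ∈ V, f (ofRealn x) = g (ofRealn x))) :
    ∀ q ∈ Ω, f q = g q :=
  identity_principle_general n Ω hΩ f g hreg hcoin
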